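/- Let n ≥ 1, μ = 2, u₀ ∈ L¹(ℝⁿ) and u₁ ∈ L^{1,1}(ℝⁿ). For ξ ∈ ℝⁿ \ {0} write r := |ξ| and b(r) := √(r² - log²(1+r)), and define w(t,ξ) := (1+r)^{-t} [ cos(b(r)t)·û₀(ξ) + (log(1+r)/b(r))·sin(b(r)t)·û₀(ξ) + (1/b(r))·sin(b(r)t)·û₁(ξ) ] and ν(t,ξ) := P₁ (1+r)^{-t} (1/b(r)) sin(b(r) t), where P₁ := ∫_{ℝⁿ} u₁(x) dx. Then there exist constants C > 0 and t₀ > 0, with C depending only on n, such that for all t ≥ t₀: ∫_{ℝⁿ} |w(t,ξ) - ν(t,ξ)|² dξ ≤ C (‖u₁‖_{1,1} + ‖u₀‖₁)² t^{-n}. -/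

import Mathlib

/-!
Write `r = |ξ|`. Since `|sin (b t) / b| ≤ t` whatever `b` is, and `log (1 + r) ≤ r`, the only
singular coefficient `1 / b(r)` is harmless once `û₁(ξ)` is replaced by `û₁(ξ) - P₁`, which is
`O(r ‖u₁‖_{1,1})` because `|e^{-iθ} - 1| ≤ |θ|`. Hence `|w - ν| ≤ (1 + r)^{-t} (1 + t r) M`
with `M = ‖u₁‖_{1,1} + ‖u₀‖₁`, and Bernoulli's inequality `1 + t r / 2 ≤ (1 + r)^{t/2}` turns
the square of this into `4 M² (1 + r)^{-t}`. Finally the substitution `ξ = t η` gives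
`∫ (1 + |ξ|)^{-t} dξ = t^{-n} ∫ (1 + |η| / t)^{-t} dη ≤ C_n t^{-n}` for `t ≥ n + 1`.
-/

open MeasureTheory

/-- The Fourier transform `f̂(ξ) = ∫ e^{-i x·ξ} f(x) dx`. -/
noncomputable def fourierTransformCLM' {n : ℕ} (f : EuclideanSpace ℝ (Fin n) → ℂ)
    (ξ : EuclideanSpace ℝ (Fin n)) : ℂ :=
  ∫ x, Complex.exp (-(Complex.I * ((inner ℝ x ξ : ℝ) : ℂ))) * f x

open Real Module

/-- `s ↦ (1 + x / s) ^ s` is increasing (Bernoulli), and `1 + x / a ≥ (1 + x) / a` for `a ≥ 1`. -/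
lemma one_add_div_rpow_neg_le {a t x : ℝ} (ha : 1 ≤ a) (hat : a ≤ t) (hx : 0 ≤ x) :
    (1 + x / t) ^ (-t) ≤ a ^ a * (1 + x) ^ (-a) := by
  have ha0 : 0 < a := by linarith
  have ht0 : 0 < t := by linarith
  have hbern : 1 + x / a ≤ (1 + x / t) ^ (t / a) := by
    have h := one_add_mul_self_le_rpow_one_add (s := x / t) (by linarith [div_nonneg hx ht0.le])
      ((one_le_div ha0).2 hat)
    rwa [show t / a * (x / t) = x / a by field_simp] at h
  have hpow : (1 + x / a) ^ a ≤ (1 + x / t) ^ t := by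
    calc (1 + x / a) ^ a ≤ ((1 + x / t) ^ (t / a)) ^ a := by gcongr
      _ = (1 + x / t) ^ t := by rw [← rpow_mul (by positivity), div_mul_cancel₀ _ ha0.ne']
  have hdiv : (1 + x) / a ≤ 1 + x / a := by
    rw [add_div]; gcongr; exact (div_le_one ha0).2 ha
  calc (1 + x / t) ^ (-t) ≤ (1 + x / a) ^ (-a) := by
        rw [rpow_neg (by positivity), rpow_neg (by positivity)]
        exact inv_anti₀ (by positivity) hpow
    _ ≤ ((1 + x) / a) ^ (-a) := rpow_le_rpow_of_nonpos (by positivity) hdiv (by linarith)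
    _ = a ^ a * (1 + x) ^ (-a) := by
        rw [div_rpow (by positivity) ha0.le, rpow_neg (by positivity), rpow_neg ha0.le]
        field_simp

section Haar

variable {E : Type*} [NormedAddCommGroup E] [NormedSpace ℝ E] [FiniteDimensional ℝ E]
  [MeasurableSpace E] [BorelSpace E] (μ : Measure E) [μ.IsAddHaarMeasure]

lemma integral_one_add_norm_rpow_neg_eq (t : ℝ) (ht : 0 < t) :
    ∫ x, (1 + ‖x‖) ^ (-t) ∂μ = t ^ (-(finrank ℝ E : ℝ)) * ∫ x, (1 + ‖x‖ / t) ^ (-t) ∂μ := by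
  have h := μ.integral_comp_smul_of_nonneg (fun x : E => (1 + ‖x‖ / t) ^ (-t)) t (hR := ht.le)
  simp only [norm_smul, norm_of_nonneg ht.le, smul_eq_mul] at h
  rw [rpow_neg ht.le, rpow_natCast, ← h]
  congr 1 with x
  field_simp

lemma integral_one_add_norm_rpow_neg_le {t : ℝ} (ht : finrank ℝ E + 1 ≤ t) :
    ∫ x, (1 + ‖x‖) ^ (-t) ∂μ ≤ (finrank ℝ E + 1 : ℝ) ^ (finrank ℝ E + 1 : ℝ) *
      (∫ x, (1 + ‖x‖) ^ (-(finrank ℝ E + 1 : ℝ)) ∂μ) * t ^ (-(finrank ℝ E : ℝ)) := by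
  set a : ℝ := finrank ℝ E + 1
  have ha : 1 ≤ a := by simp [a]
  have ht0 : 0 < t := by linarith
  rw [integral_one_add_norm_rpow_neg_eq μ t ht0, mul_comm, ← integral_const_mul]
  refine mul_le_mul_of_nonneg_right ?_ (by positivity)
  refine integral_mono_of_nonneg (.of_forall fun x : E => by positivity)
    ((integrable_one_add_norm (μ := μ) (by simp [a])).const_mul _)
    (.of_forall fun x : E => one_add_div_rpow_neg_le ha ht (norm_nonneg x))

lemma exists_integral_one_add_norm_rpow_neg_le :
    ∃ C > 0, ∀ t : ℝ, finrank ℝ E + 1 ≤ t →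
      ∫ x, (1 + ‖x‖) ^ (-t) ∂μ ≤ C * t ^ (-(finrank ℝ E : ℝ)) := by
  refine ⟨_, ?_, fun t ht => integral_one_add_norm_rpow_neg_le μ ht⟩
  have hint : 0 < ∫ x, (1 + ‖x‖) ^ (-(finrank ℝ E + 1 : ℝ)) ∂μ :=
    integral_pos_of_integrable_nonneg_nonzero (x := 0)
      ((continuous_const.add continuous_norm).rpow_const fun x : E =>
        .inl (by positivity : (0 : ℝ) < 1 + ‖x‖).ne')
      (integrable_one_add_norm (by simp)) (fun x => by simp only [Pi.zero_apply]; positivity)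
      (by simp)
  positivity

end Haar

section Fourier

variable {n : ℕ}

lemma norm_fourierTransformCLM'_le (f : EuclideanSpace ℝ (Fin n) → ℂ)
    (ξ : EuclideanSpace ℝ (Fin n)) : ‖fourierTransformCLM' f ξ‖ ≤ ∫ x, ‖f x‖ :=
  (norm_integral_le_integral_norm _).trans_eq <| integral_congr_ae <| .of_forall fun x => by
    simp [Complex.norm_exp]

lemma norm_fourierTransformCLM'_sub_integral_le {f : EuclideanSpace ℝ (Fin n) → ℂ}
    (hf : Integrable f) (hfw : Integrable fun x => (1 + ‖x‖) * ‖f x‖)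
    (ξ : EuclideanSpace ℝ (Fin n)) :
    ‖fourierTransformCLM' f ξ - ∫ x, f x‖ ≤ ‖ξ‖ * ∫ x, (1 + ‖x‖) * ‖f x‖ := by
  have hkernel : Integrable fun x => Complex.exp (-(Complex.I * ((inner ℝ x ξ : ℝ) : ℂ))) * f x :=
    hf.bdd_mul (c := 1) (by fun_prop) (.of_forall fun x => by simp [Complex.norm_exp])
  rw [fourierTransformCLM', ← integral_sub hkernel hf, ← integral_const_mul]
  refine (norm_integral_le_integral_norm _).trans <| integral_mono_of_nonneg
    (.of_forall fun _ => norm_nonneg _) (hfw.const_mul _) (.of_forall fun x => ?_)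
  have hexp : ‖Complex.exp (-(Complex.I * ((inner ℝ x ξ : ℝ) : ℂ))) - 1‖ ≤ ‖x‖ * ‖ξ‖ := by
    have h := Real.norm_exp_I_mul_ofReal_sub_one_le (x := -inner ℝ x ξ)
    rw [Complex.ofReal_neg, mul_neg, norm_neg] at h
    exact h.trans (norm_inner_le_norm x ξ)
  calc ‖Complex.exp (-(Complex.I * ((inner ℝ x ξ : ℝ) : ℂ))) * f x - f x‖
      = ‖Complex.exp (-(Complex.I * ((inner ℝ x ξ : ℝ) : ℂ))) - 1‖ * ‖f x‖ := by
        rw [← norm_mul, sub_one_mul]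
    _ ≤ ‖x‖ * ‖ξ‖ * ‖f x‖ := by gcongr
    _ ≤ ‖ξ‖ * ((1 + ‖x‖) * ‖f x‖) := by nlinarith [norm_nonneg ξ, norm_nonneg (f x)]

end Fourier

lemma abs_one_div_mul_abs_sin_mul_le (b : ℝ) {t : ℝ} (ht : 0 ≤ t) :
    |1 / b| * |sin (b * t)| ≤ t := by
  rcases eq_or_ne b 0 with rfl | hb
  · simpa using ht
  calc |1 / b| * |sin (b * t)| ≤ |1 / b| * |b * t| :=
        mul_le_mul_of_nonneg_left abs_sin_le_abs (abs_nonneg _)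
    _ = t := by rw [← abs_mul, ← mul_assoc, one_div_mul_cancel hb, one_mul, abs_of_nonneg ht]

lemma sq_rpow_neg_mul_one_add_mul_le {r t : ℝ} (hr : 0 ≤ r) (ht : 2 ≤ t) :
    ((1 + r) ^ (-t) * (1 + t * r)) ^ 2 ≤ 4 * (1 + r) ^ (-t) := by
  have hbern : 1 + t / 2 * r ≤ (1 + r) ^ (t / 2) :=
    one_add_mul_self_le_rpow_one_add (by linarith) (by linarith)
  have hhalf : (1 + r) ^ (-t) * (1 + t * r) ≤ 2 * (1 + r) ^ (-(t / 2)) :=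
    calc (1 + r) ^ (-t) * (1 + t * r) ≤ (1 + r) ^ (-t) * (2 * (1 + r) ^ (t / 2)) := by
          gcongr; linarith
      _ = 2 * (1 + r) ^ (-(t / 2)) := by
          rw [mul_left_comm, ← rpow_add (by linarith)]; ring_nf
  calc ((1 + r) ^ (-t) * (1 + t * r)) ^ 2 ≤ (2 * (1 + r) ^ (-(t / 2))) ^ 2 := by
        gcongr
    _ = 4 * (1 + r) ^ (-t) := by
        rw [mul_pow, ← rpow_natCast ((1 + r) ^ (-(t / 2))) 2, ← rpow_mul (by linarith)]; norm_num

lemma sq_norm_damped_oscillation_sub_le {r b t M₀ M₁ : ℝ} (F₀ F₁ P : ℂ) (hr : 0 ≤ r)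
    (ht : 2 ≤ t) (hM₁ : 0 ≤ M₁) (hF₀ : ‖F₀‖ ≤ M₀) (hF₁ : ‖F₁ - P‖ ≤ r * M₁) :
    ‖(((1 + r) ^ (-t) : ℝ) : ℂ) * (((cos (b * t) : ℝ) : ℂ) * F₀ +
        ((log (1 + r) / b : ℝ) : ℂ) * ((sin (b * t) : ℝ) : ℂ) * F₀ +
        ((1 / b : ℝ) : ℂ) * ((sin (b * t) : ℝ) : ℂ) * F₁) -
      P * (((1 + r) ^ (-t) : ℝ) : ℂ) * ((1 / b : ℝ) : ℂ) * ((sin (b * t) : ℝ) : ℂ)‖ ^ 2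
      ≤ 4 * (M₁ + M₀) ^ 2 * (1 + r) ^ (-t) := by
  set A : ℝ := (1 + r) ^ (-t)
  set L : ℝ := log (1 + r)
  set s : ℝ := 1 / b * sin (b * t)
  have hL : 0 ≤ L := log_nonneg (by linarith)
  have hLr : L ≤ r := by linarith [log_le_sub_one_of_pos (x := 1 + r) (by linarith)]
  have hs : |s| ≤ t := by rw [abs_mul]; exact abs_one_div_mul_abs_sin_mul_le b (by linarith)
  have hsplit : (A : ℂ) * (((cos (b * t) : ℝ) : ℂ) * F₀ +
        ((L / b : ℝ) : ℂ) * ((sin (b * t) : ℝ) : ℂ) * F₀ +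
        ((1 / b : ℝ) : ℂ) * ((sin (b * t) : ℝ) : ℂ) * F₁) -
      P * (A : ℂ) * ((1 / b : ℝ) : ℂ) * ((sin (b * t) : ℝ) : ℂ) =
      A * ((cos (b * t) : ℂ) * F₀ + ((L * s : ℝ) : ℂ) * F₀ + (s : ℂ) * (F₁ - P)) := by
    simp only [s, div_eq_mul_one_div L b]
    push_cast
    ring
  have hbracket : ‖(cos (b * t) : ℂ) * F₀ + ((L * s : ℝ) : ℂ) * F₀ + (s : ℂ) * (F₁ - P)‖
      ≤ (1 + t * r) * (M₁ + M₀) := by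
    refine norm_add₃_le.trans ?_
    simp only [norm_mul, Complex.norm_real, norm_eq_abs, abs_of_nonneg hL]
    have hcos : |cos (b * t)| * ‖F₀‖ ≤ M₀ :=
      (mul_le_of_le_one_left (norm_nonneg _) (abs_cos_le_one _)).trans hF₀
    have hsin₀ : L * |s| * ‖F₀‖ ≤ r * t * M₀ := by gcongr
    have hsin₁ : |s| * ‖F₁ - P‖ ≤ t * (r * M₁) := by gcongr
    nlinarith [(norm_nonneg F₀).trans hF₀]
  calc _ = (A * ‖(cos (b * t) : ℂ) * F₀ + ((L * s : ℝ) : ℂ) * F₀ + (s : ℂ) * (F₁ - P)‖) ^ 2 := by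
        rw [hsplit, norm_mul, Complex.norm_real, norm_of_nonneg (by positivity)]
    _ ≤ (A * ((1 + t * r) * (M₁ + M₀))) ^ 2 := by gcongr
    _ = (M₁ + M₀) ^ 2 * (A * (1 + t * r)) ^ 2 := by ring
    _ ≤ (M₁ + M₀) ^ 2 * (4 * A) := by gcongr; exact sq_rpow_neg_mul_one_add_mul_le hr ht
    _ = 4 * (M₁ + M₀) ^ 2 * A := by ring

theorem stmt13_general (n : ℕ)
    (u₀ u₁ : EuclideanSpace ℝ (Fin n) → ℂ)
    (hu₁ : Integrable u₁)
    (hu₁w : Integrable (fun x : EuclideanSpace ℝ (Fin n) => (1 + ‖x‖) * ‖u₁ x‖)) :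
    let b : ℝ → ℝ := fun r => Real.sqrt (r ^ 2 - Real.log (1 + r) ^ 2)
    let P₁ : ℂ := ∫ x, u₁ x
    let w : ℝ → EuclideanSpace ℝ (Fin n) → ℂ := fun t ξ =>
      (((1 + ‖ξ‖) ^ (-t) : ℝ) : ℂ) *
        (((Real.cos (b ‖ξ‖ * t) : ℝ) : ℂ) * fourierTransformCLM' u₀ ξ +
         ((Real.log (1 + ‖ξ‖) / b ‖ξ‖ : ℝ) : ℂ) *
           ((Real.sin (b ‖ξ‖ * t) : ℝ) : ℂ) * fourierTransformCLM' u₀ ξ +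
         ((1 / b ‖ξ‖ : ℝ) : ℂ) * ((Real.sin (b ‖ξ‖ * t) : ℝ) : ℂ) *
           fourierTransformCLM' u₁ ξ)
    let ν : ℝ → EuclideanSpace ℝ (Fin n) → ℂ := fun t ξ =>
      P₁ * (((1 + ‖ξ‖) ^ (-t) : ℝ) : ℂ) * ((1 / b ‖ξ‖ : ℝ) : ℂ) *
        ((Real.sin (b ‖ξ‖ * t) : ℝ) : ℂ)
    ∃ C t₀ : ℝ, 0 < C ∧ 0 < t₀ ∧ ∀ t : ℝ, t₀ ≤ t →
      (∫ ξ : EuclideanSpace ℝ (Fin n), ‖w t ξ - ν t ξ‖ ^ 2) ≤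
        C * ((∫ x, (1 + ‖x‖) * ‖u₁ x‖) + (∫ x, ‖u₀ x‖)) ^ 2 * t ^ (-(n : ℝ)) := by
  intro b P₁ w ν
  obtain ⟨C, hC, hdecay⟩ :=
    exists_integral_one_add_norm_rpow_neg_le (volume : Measure (EuclideanSpace ℝ (Fin n)))
  rw [finrank_euclideanSpace_fin] at hdecay
  set M₁ := ∫ x, (1 + ‖x‖) * ‖u₁ x‖
  set M₀ := ∫ x, ‖u₀ x‖
  have hM₁ : 0 ≤ M₁ := integral_nonneg fun x => by positivity
  refine ⟨4 * C, n + 2, by positivity, by positivity, fun t ht => ?_⟩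
  have hpointwise (ξ : EuclideanSpace ℝ (Fin n)) :
      ‖w t ξ - ν t ξ‖ ^ 2 ≤ 4 * (M₁ + M₀) ^ 2 * (1 + ‖ξ‖) ^ (-t) :=
    sq_norm_damped_oscillation_sub_le _ _ P₁ (norm_nonneg ξ) (by linarith) hM₁
      (norm_fourierTransformCLM'_le u₀ ξ) (norm_fourierTransformCLM'_sub_integral_le hu₁ hu₁w ξ)
  have hint : Integrable fun ξ : EuclideanSpace ℝ (Fin n) =>
      4 * (M₁ + M₀) ^ 2 * (1 + ‖ξ‖) ^ (-t) :=
    (integrable_one_add_norm (μ := volume)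
      (by rw [finrank_euclideanSpace_fin]; linarith)).const_mul _
  calc (∫ ξ, ‖w t ξ - ν t ξ‖ ^ 2)
      ≤ ∫ ξ : EuclideanSpace ℝ (Fin n), 4 * (M₁ + M₀) ^ 2 * (1 + ‖ξ‖) ^ (-t) :=
        integral_mono_of_nonneg (.of_forall fun _ => by positivity) hint (.of_forall hpointwise)
    _ = 4 * (M₁ + M₀) ^ 2 * ∫ ξ : EuclideanSpace ℝ (Fin n), (1 + ‖ξ‖) ^ (-t) :=
        integral_const_mul _ _
    _ ≤ 4 * (M₁ + M₀) ^ 2 * (C * t ^ (-(n : ℝ))) := by gcongr; exact hdecay t (by linarith)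
    _ = 4 * C * (M₁ + M₀) ^ 2 * t ^ (-(n : ℝ)) := by ring

/-- Theorem 1.5 (critical case `μ = 2`): for `u₀ ∈ L¹`, `u₁ ∈ L^{1,1}`,
`∫ |w(t,ξ) - ν(t,ξ)|² dξ ≤ C(‖u₁‖_{1,1} + ‖u₀‖₁)² t^{-n}` for large `t`. -/
theorem stmt13 (n : ℕ) (hn : 1 ≤ n)
    (u₀ u₁ : EuclideanSpace ℝ (Fin n) → ℂ)
    (hu₀ : Integrable u₀) (hu₁ : Integrable u₁)
    (hu₁w : Integrable (fun x : EuclideanSpace ℝ (Fin n) => (1 + ‖x‖) * ‖u₁ x‖)) :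
    let b : ℝ → ℝ := fun r => Real.sqrt (r ^ 2 - Real.log (1 + r) ^ 2)
    let P₁ : ℂ := ∫ x, u₁ x
    let w : ℝ → EuclideanSpace ℝ (Fin n) → ℂ := fun t ξ =>
      (((1 + ‖ξ‖) ^ (-t) : ℝ) : ℂ) *
        (((Real.cos (b ‖ξ‖ * t) : ℝ) : ℂ) * fourierTransformCLM' u₀ ξ +
         ((Real.log (1 + ‖ξ‖) / b ‖ξ‖ : ℝ) : ℂ) *
           ((Real.sin (b ‖ξ‖ * t) : ℝ) : ℂ) * fourierTransformCLM' u₀ ξ +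
         ((1 / b ‖ξ‖ : ℝ) : ℂ) * ((Real.sin (b ‖ξ‖ * t) : ℝ) : ℂ) *
           fourierTransformCLM' u₁ ξ)
    let ν : ℝ → EuclideanSpace ℝ (Fin n) → ℂ := fun t ξ =>
      P₁ * (((1 + ‖ξ‖) ^ (-t) : ℝ) : ℂ) * ((1 / b ‖ξ‖ : ℝ) : ℂ) *
        ((Real.sin (b ‖ξ‖ * t) : ℝ) : ℂ)
    ∃ C t₀ : ℝ, 0 < C ∧ 0 < t₀ ∧ ∀ t : ℝ, t₀ ≤ t →
      (∫ ξ : EuclideanSpace ℝ (Fin n), ‖w t ξ - ν t ξ‖ ^ 2) ≤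
        C * ((∫ x, (1 + ‖x‖) * ‖u₁ x‖) + (∫ x, ‖u₀ x‖)) ^ 2 * t ^ (-(n : ℝ)) :=
  stmt13_general n u₀ u₁ hu₁ hu₁w
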